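/- Let W be a finite Coxeter group, w ∈ W, and let x₀ be the minimal-length element of the double coset X = W_{D_L(w)} w W_{D_R(w)}. Then for every x ∈ X, the number of Bruhat-graph edges entering x from outside X equals ℓ(x₀); that is, |{y ∈ W \ X : y → x}| = ℓ(x₀). -/

import Mathlib

/-!
The Bruhat in-neighbours of `x` are the elements `t * x` with `t` a left inversion of `x`
(a reflection with `ℓ (t * x) < ℓ x`). Tits' sign representation of `W` on `W × ℤˣ` shows that
`x` has exactly `ℓ x` left inversions and that they obey the cocycle rule: `t` is a left inversion
of `x * y` iff exactly one of "`t` is a left inversion of `x`" and "`x⁻¹ * t * x` is a left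
inversion of `y`" holds. Consequently, for a simple reflection `s`, the map `y ↦ s * y` carries the
Bruhat edges `y → x` to edges `s * y → s * x`, except the edge between `x` and `s * x`; right
multiplication acts likewise. If `X` is stable under `s`, that exceptional edge lies inside `X`, so
multiplying by `W_I` on the left and by `W_J` on the right permutes the edges entering `X` from
outside. Their number is thus constant along `X`, and at the minimal element `x₀` every
in-neighbour is shorter than `x₀`, hence outside `X`.
-/

open CoxeterSystem

variable {B W : Type*} [Group W] {M : CoxeterMatrix B}

/-- A directed edge of the Bruhat graph: `v = t * u` for a reflection `t`, with length increase. -/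
def bruhatEdge (cs : CoxeterSystem M W) (u v : W) : Prop :=
  ∃ t : W, cs.IsReflection t ∧ v = t * u ∧ cs.length u < cs.length v

/-- Bruhat order: reflexive-transitive closure of Bruhat edges. -/
def bruhatLE (cs : CoxeterSystem M W) : W → W → Prop :=
  Relation.ReflTransGen (bruhatEdge cs)

/-- The standard parabolic subgroup generated by the simple reflections indexed by `I`. -/
def parabolic (cs : CoxeterSystem M W) (I : Set B) : Subgroup W :=
  Subgroup.closure (cs.simple '' I)

/-- The parabolic double coset `W_I x W_J`. -/
def doubleCoset (cs : CoxeterSystem M W) (I J : Set B) (x : W) : Set W :=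
  {w | ∃ u ∈ parabolic cs I, ∃ v ∈ parabolic cs J, w = u * x * v}

open List

theorem List.even_count_of_getElem_add {α : Type*} [BEq α] (l : List α) (m : ℕ)
    (hl : l.length = 2 * m) (h : ∀ k (hk : k < m), l[k + m] = l[k]) (a : α) :
    Even (l.count a) := by
  have hdrop : l.drop m = l.take m :=
    ext_getElem (by simp; omega) fun k h₁ h₂ => by
      simpa [Nat.add_comm] using h k (by simp at h₂; omega)
  rw [← take_append_drop m l, count_append, hdrop]
  exact ⟨_, rfl⟩

theorem Int.units_mul_eq_neg_one_iff_xor (a b : ℤˣ) :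
    a * b = -1 ↔ Xor (a = -1) (b = -1) := by
  rcases Int.units_eq_one_or a with rfl | rfl <;> rcases Int.units_eq_one_or b with rfl | rfl <;>
    simp [Xor]

namespace CoxeterSystem

open scoped Classical

variable (cs : CoxeterSystem M W)

local prefix:100 "s" => cs.simple
local prefix:100 "π" => cs.wordProd
local prefix:100 "ℓ" => cs.length

theorem reverse_alternatingWord_two_mul (i j : B) (p : ℕ) :
    (alternatingWord i j (2 * p)).reverse = alternatingWord j i (2 * p) := by
  refine List.ext_getElem (by simp) fun k h₁ h₂ => ?_
  simp only [length_reverse, length_alternatingWord] at h₁ h₂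
  rw [List.getElem_reverse, getElem_alternatingWord _ _ _ _ (by simp; omega),
    getElem_alternatingWord _ _ _ _ h₂]
  simp only [length_alternatingWord, Nat.even_iff]
  split_ifs <;> first | rfl | omega

theorem wordProd_alternatingWord_two_mul_add_one (i j : B) (n : ℕ) :
    π (alternatingWord i j (2 * n + 1)) = s j * (s i * s j) ^ n := by
  rw [prod_alternatingWord_eq_mul_pow]
  simp [show (2 * n + 1) / 2 = n by omega]

theorem even_count_rightInvSeq_alternatingWord (i j : B) (t : W) :
    Even ((cs.rightInvSeq (alternatingWord i j (2 * M i j))).count t) := by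
  rw [← reverse_alternatingWord_two_mul, rightInvSeq_reverse, count_reverse]
  refine List.even_count_of_getElem_add _ (M i j) (by simp) (fun k hk => ?_) t
  rw [getElem_leftInvSeq_alternatingWord _ _ _ _ _ (by omega),
    getElem_leftInvSeq_alternatingWord _ _ _ _ _ (by omega),
    wordProd_alternatingWord_two_mul_add_one, wordProd_alternatingWord_two_mul_add_one, pow_add,
    simple_mul_simple_pow, mul_one]

theorem prod_map_alternatingWord_two_mul {G : Type*} [Monoid G] (f : B → G) (i j : B) (m : ℕ) :
    ((alternatingWord i j (2 * m)).map f).prod = (f i * f j) ^ m := by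
  induction m with
  | zero => simp [alternatingWord]
  | succ m ih =>
    rw [show 2 * (m + 1) = 2 * m + 1 + 1 by omega, alternatingWord_succ', alternatingWord_succ']
    simp [ih, pow_succ', mul_assoc]

theorem conj_simple_eq_simple_iff (i : B) (t : W) : s i * t * s i = s i ↔ t = s i := by
  constructor
  · intro h
    simpa [mul_assoc] using congrArg (fun z => s i * z * s i) h
  · rintro rfl
    simp

/-- The generator `s i` of Tits' sign representation, acting on all of `W × ℤˣ` although only
pairs whose first entry is a reflection matter. -/
noncomputable def reflectionSignPerm (i : B) : Equiv.Perm (W × ℤˣ) :=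
  Function.Involutive.toPerm (fun p => (s i * p.1 * s i, p.2 * if p.1 = s i then -1 else 1))
    (by
      rintro ⟨t, ε⟩
      ext
      · simp [mul_assoc]
      · simp only [conj_simple_eq_simple_iff]
        split_ifs <;> simp)

theorem reflectionSignPerm_apply (i : B) (t : W) (ε : ℤˣ) :
    cs.reflectionSignPerm i (t, ε) = (s i * t * s i, ε * if t = s i then -1 else 1) :=
  rfl

theorem prod_map_reflectionSignPerm_apply (ω : List B) (t : W) (ε : ℤˣ) :
    (ω.map cs.reflectionSignPerm).prod (t, ε) =
      (π ω * t * (π ω)⁻¹, ε * (-1) ^ (cs.rightInvSeq ω).count t) := by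
  induction ω generalizing t ε with
  | nil => simp
  | cons i ω ih =>
    have hconj : π ω * t * (π ω)⁻¹ = s i ↔ (π ω)⁻¹ * s i * π ω = t := by
      constructor <;> intro h <;> rw [← h] <;> group
    rw [map_cons, prod_cons, Equiv.Perm.mul_apply, ih, reflectionSignPerm_apply, rightInvSeq,
      count_cons, wordProd_cons, hconj]
    ext
    · simp [mul_assoc]
    · simp only [beq_iff_eq]
      split_ifs <;> simp [pow_succ]

theorem isLiftable_reflectionSignPerm : M.IsLiftable cs.reflectionSignPerm := by
  intro i j
  have hπ : π (alternatingWord i j (2 * M i j)) = 1 := by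
    simp [prod_alternatingWord_eq_mul_pow]
  ext ⟨t, ε⟩ <;>
    rw [← prod_map_alternatingWord_two_mul, prod_map_reflectionSignPerm_apply, hπ,
      (cs.even_count_rightInvSeq_alternatingWord i j t).neg_one_pow] <;> simp

noncomputable def reflectionSignRep : W →* Equiv.Perm (W × ℤˣ) :=
  cs.lift ⟨cs.reflectionSignPerm, cs.isLiftable_reflectionSignPerm⟩

theorem reflectionSignRep_wordProd (ω : List B) :
    cs.reflectionSignRep (π ω) = (ω.map cs.reflectionSignPerm).prod := by
  rw [wordProd, map_list_prod, map_map]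
  congr 1
  exact map_congr_left fun i _ => cs.lift_apply_simple cs.isLiftable_reflectionSignPerm i

noncomputable def inversionSign (x t : W) : ℤˣ := (cs.reflectionSignRep x (t, 1)).2

theorem inversionSign_wordProd (ω : List B) (t : W) :
    cs.inversionSign (π ω) t = (-1) ^ (cs.rightInvSeq ω).count t := by
  simp [inversionSign, reflectionSignRep_wordProd, prod_map_reflectionSignPerm_apply]

theorem reflectionSignRep_apply (x t : W) (ε : ℤˣ) :
    cs.reflectionSignRep x (t, ε) = (x * t * x⁻¹, ε * cs.inversionSign x t) := by
  obtain ⟨ω, rfl⟩ := cs.wordProd_surjective x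
  rw [reflectionSignRep_wordProd, prod_map_reflectionSignPerm_apply, inversionSign_wordProd]

theorem inversionSign_mul (x y t : W) :
    cs.inversionSign (x * y) t = cs.inversionSign y t * cs.inversionSign x (y * t * y⁻¹) := by
  rw [inversionSign, map_mul, Equiv.Perm.mul_apply, reflectionSignRep_apply,
    reflectionSignRep_apply, one_mul]

theorem inversionSign_one (t : W) : cs.inversionSign 1 t = 1 := by
  simp [inversionSign]

theorem inversionSign_simple (i : B) (t : W) :
    cs.inversionSign (s i) t = if t = s i then -1 else 1 := by
  rw [← wordProd_singleton, inversionSign_wordProd]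
  by_cases ht : t = s i <;> simp [rightInvSeq, ht, eq_comm]

theorem IsReflection.inversionSign_self {t : W} (ht : cs.IsReflection t) :
    cs.inversionSign t t = -1 := by
  -- For `t = u * s i * u⁻¹` the cocycle rule turns the left side into
  -- `-(inversionSign u⁻¹ t * inversionSign u (s i))`, and that product is
  -- `inversionSign (u * u⁻¹) t = 1`.
  obtain ⟨u, i, rfl⟩ := ht
  have hconj : u⁻¹ * (u * s i * u⁻¹) * u⁻¹⁻¹ = s i := by group
  have hcancel := cs.inversionSign_mul u u⁻¹ (u * s i * u⁻¹)
  rw [mul_inv_cancel, inversionSign_one, hconj] at hcancel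
  rw [inversionSign_mul, hconj, inversionSign_mul, inversionSign_simple, if_pos rfl,
    show s i * s i * (s i)⁻¹ = s i by simp, neg_one_mul, mul_neg, ← hcancel]

theorem mem_rightInvSeq_of_inversionSign_wordProd_eq_neg_one {ω : List B} {t : W}
    (h : cs.inversionSign (π ω) t = -1) : t ∈ cs.rightInvSeq ω := by
  by_contra hmem
  rw [inversionSign_wordProd, count_eq_zero_of_not_mem hmem, pow_zero] at h
  exact absurd h (by decide)

theorem isRightInversion_of_inversionSign_eq_neg_one {x t : W}
    (h : cs.inversionSign x t = -1) : cs.IsRightInversion x t := by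
  obtain ⟨ω, hω, rfl⟩ := cs.exists_isReduced x
  exact cs.isRightInversion_of_mem_rightInvSeq hω
    (cs.mem_rightInvSeq_of_inversionSign_wordProd_eq_neg_one h)

theorem isRightInversion_iff_inversionSign_eq_neg_one {x t : W} (ht : cs.IsReflection t) :
    cs.IsRightInversion x t ↔ cs.inversionSign x t = -1 := by
  refine ⟨fun hx => ?_, cs.isRightInversion_of_inversionSign_eq_neg_one⟩
  have hflip : cs.inversionSign x t = -cs.inversionSign (x * t) t := by
    calc cs.inversionSign x t = cs.inversionSign (x * t * t) t := by
          rw [mul_assoc, ht.mul_self, mul_one]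
      _ = -cs.inversionSign (x * t) t := by
          rw [inversionSign_mul, ht.inversionSign_self, ht.inv, ht.mul_self, one_mul, neg_one_mul]
  rcases Int.units_eq_one_or (cs.inversionSign (x * t) t) with h | h
  · rw [hflip, h]
  · have hlt := (cs.isRightInversion_of_inversionSign_eq_neg_one h).2
    rw [mul_assoc, ht.mul_self, mul_one] at hlt
    exact absurd hx.2 hlt.not_gt

theorem ncard_setOf_isRightInversion (x : W) :
    {t | cs.IsRightInversion x t}.ncard = ℓ x := by
  obtain ⟨ω, hω, rfl⟩ := cs.exists_isReduced x
  have hset : {t | cs.IsRightInversion (π ω) t} = ((cs.rightInvSeq ω).toFinset : Set W) := by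
    ext t
    simp only [Set.mem_ofPred_eq, Finset.mem_coe, mem_toFinset]
    exact ⟨fun ht => cs.mem_rightInvSeq_of_inversionSign_wordProd_eq_neg_one
      ((cs.isRightInversion_iff_inversionSign_eq_neg_one ht.1).1 ht),
      cs.isRightInversion_of_mem_rightInvSeq hω⟩
  rw [hset, Set.ncard_coe_finset, toFinset_card_of_nodup hω.nodup_rightInvSeq,
    length_rightInvSeq, hω]

theorem ncard_setOf_isLeftInversion (x : W) :
    {t | cs.IsLeftInversion x t}.ncard = ℓ x := by
  simp_rw [← isRightInversion_inv_iff, ncard_setOf_isRightInversion, length_inv]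

theorem isLeftInversion_mul_iff {x y t : W} (ht : cs.IsReflection t) :
    cs.IsLeftInversion (x * y) t ↔
      Xor (cs.IsLeftInversion x t) (cs.IsLeftInversion y (x⁻¹ * t * x)) := by
  have ht' : cs.IsReflection (x⁻¹ * t * x) := by simpa using ht.conj x⁻¹
  rw [← isRightInversion_inv_iff, ← isRightInversion_inv_iff, ← isRightInversion_inv_iff,
    cs.isRightInversion_iff_inversionSign_eq_neg_one ht,
    cs.isRightInversion_iff_inversionSign_eq_neg_one ht,
    cs.isRightInversion_iff_inversionSign_eq_neg_one ht', mul_inv_rev, inversionSign_mul, inv_inv,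
    Int.units_mul_eq_neg_one_iff_xor]

theorem isLeftInversion_simple_iff (i : B) (t : W) : cs.IsLeftInversion (s i) t ↔ t = s i := by
  refine ⟨fun ⟨_, hlt⟩ => ?_, ?_⟩
  · rw [length_simple, Nat.lt_one_iff, length_eq_zero_iff, mul_eq_one_iff_eq_inv, inv_simple] at hlt
    exact hlt
  · rintro rfl
    exact ⟨cs.isReflection_simple i, by simp⟩

end CoxeterSystem

section BruhatGraph

variable (cs : CoxeterSystem M W)

theorem bruhatEdge_iff_exists_isLeftInversion {y x : W} :
    bruhatEdge cs y x ↔ ∃ t, cs.IsLeftInversion x t ∧ y = t * x := by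
  constructor
  · rintro ⟨t, ht, rfl, hlt⟩
    have hy : y = t * (t * y) := by rw [← mul_assoc, ht.mul_self, one_mul]
    exact ⟨t, ⟨ht, hy ▸ hlt⟩, hy⟩
  · rintro ⟨t, ⟨ht, hlt⟩, rfl⟩
    exact ⟨t, ht, by rw [← mul_assoc, ht.mul_self, one_mul], hlt⟩

theorem ncard_setOf_bruhatEdge (x : W) : {y | bruhatEdge cs y x}.ncard = cs.length x := by
  have hset : {y | bruhatEdge cs y x} = (· * x) '' {t | cs.IsLeftInversion x t} := by
    ext y
    simp only [Set.mem_ofPred_eq, Set.mem_image, bruhatEdge_iff_exists_isLeftInversion,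
      eq_comm (a := y)]
  rw [hset, Set.ncard_image_of_injective _ (mul_left_injective x),
    cs.ncard_setOf_isLeftInversion]

def inNeighborsOutside (X : Set W) (x : W) : Set W := {y | y ∉ X ∧ bruhatEdge cs y x}

variable {cs}

theorem bruhatEdge.simple_mul {y x : W} {i : B} (h : bruhatEdge cs y x)
    (hne : y ≠ cs.simple i * x) : bruhatEdge cs (cs.simple i * y) (cs.simple i * x) := by
  obtain ⟨t, ht, rfl⟩ := (bruhatEdge_iff_exists_isLeftInversion cs).1 h
  have hti : t ≠ cs.simple i := by rintro rfl; exact hne rfl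
  refine (bruhatEdge_iff_exists_isLeftInversion cs).2
    ⟨cs.simple i * t * cs.simple i, ?_, by simp [mul_assoc]⟩
  rw [cs.isLeftInversion_mul_iff (by simpa using ht.1.conj (cs.simple i)),
    cs.isLeftInversion_simple_iff, cs.conj_simple_eq_simple_iff]
  simpa [Xor, hti, mul_assoc] using ht

theorem bruhatEdge.mul_simple {y x : W} {i : B} (h : bruhatEdge cs y x)
    (hne : y ≠ x * cs.simple i) : bruhatEdge cs (y * cs.simple i) (x * cs.simple i) := by
  obtain ⟨t, ht, rfl⟩ := (bruhatEdge_iff_exists_isLeftInversion cs).1 h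
  have hti : x⁻¹ * t * x ≠ cs.simple i := by
    rintro h
    exact hne (by rw [← h]; group)
  refine (bruhatEdge_iff_exists_isLeftInversion cs).2 ⟨t, ?_, by rw [mul_assoc]⟩
  rw [cs.isLeftInversion_mul_iff ht.1, cs.isLeftInversion_simple_iff]
  simpa [Xor, hti] using ht

variable {X : Set W}

theorem image_simple_mul_inNeighborsOutside_subset {i : B} (hX : ∀ x ∈ X, cs.simple i * x ∈ X)
    {x : W} (hx : x ∈ X) :
    (cs.simple i * ·) '' inNeighborsOutside cs X x ⊆ inNeighborsOutside cs X (cs.simple i * x) := by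
  rintro _ ⟨y, ⟨hyX, hy⟩, rfl⟩
  refine ⟨fun h => hyX ?_, hy.simple_mul (by rintro rfl; exact hyX (hX x hx))⟩
  simpa using hX _ h

theorem inNeighborsOutside_simple_mul {i : B} (hX : ∀ x ∈ X, cs.simple i * x ∈ X) {x : W}
    (hx : x ∈ X) :
    inNeighborsOutside cs X (cs.simple i * x) = (cs.simple i * ·) '' inNeighborsOutside cs X x := by
  refine (Set.Subset.antisymm ?_ (image_simple_mul_inNeighborsOutside_subset hX hx))
  intro z hz
  have h := image_simple_mul_inNeighborsOutside_subset hX (hX x hx) ⟨z, hz, rfl⟩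
  exact ⟨_, by simpa using h, by simp⟩

theorem image_mul_simple_inNeighborsOutside_subset {i : B} (hX : ∀ x ∈ X, x * cs.simple i ∈ X)
    {x : W} (hx : x ∈ X) :
    (· * cs.simple i) '' inNeighborsOutside cs X x ⊆ inNeighborsOutside cs X (x * cs.simple i) := by
  rintro _ ⟨y, ⟨hyX, hy⟩, rfl⟩
  refine ⟨fun h => hyX ?_, hy.mul_simple (by rintro rfl; exact hyX (hX x hx))⟩
  simpa [mul_assoc] using hX _ h

theorem inNeighborsOutside_mul_simple {i : B} (hX : ∀ x ∈ X, x * cs.simple i ∈ X) {x : W}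
    (hx : x ∈ X) :
    inNeighborsOutside cs X (x * cs.simple i) = (· * cs.simple i) '' inNeighborsOutside cs X x := by
  refine (Set.Subset.antisymm ?_ (image_mul_simple_inNeighborsOutside_subset hX hx))
  intro z hz
  have h := image_mul_simple_inNeighborsOutside_subset hX (hX x hx) ⟨z, hz, rfl⟩
  exact ⟨_, by simpa [mul_assoc] using h, by simp [mul_assoc]⟩

theorem inNeighborsOutside_mul_left {I : Set B}
    (hX : ∀ u ∈ parabolic cs I, ∀ x ∈ X, u * x ∈ X) {u : W} (hu : u ∈ parabolic cs I) {x : W}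
    (hx : x ∈ X) : inNeighborsOutside cs X (u * x) = (u * ·) '' inNeighborsOutside cs X x := by
  have hsimple : ∀ i ∈ I, ∀ x ∈ X, cs.simple i * x ∈ X := fun i hi =>
    hX _ (Subgroup.subset_closure ⟨i, hi, rfl⟩)
  induction hu using Subgroup.closure_induction'' generalizing x with
  | mem _ hg =>
    obtain ⟨i, hi, rfl⟩ := hg
    exact inNeighborsOutside_simple_mul (hsimple i hi) hx
  | inv_mem _ hg =>
    obtain ⟨i, hi, rfl⟩ := hg
    rw [inv_simple]
    exact inNeighborsOutside_simple_mul (hsimple i hi) hx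
  | one => simp
  | mul a b _ hb iha ihb =>
    rw [mul_assoc, iha (hX b hb x hx), ihb hx, Set.image_image]
    simp only [mul_assoc]

theorem inNeighborsOutside_mul_right {J : Set B}
    (hX : ∀ v ∈ parabolic cs J, ∀ x ∈ X, x * v ∈ X) {v : W} (hv : v ∈ parabolic cs J) {x : W}
    (hx : x ∈ X) : inNeighborsOutside cs X (x * v) = (· * v) '' inNeighborsOutside cs X x := by
  have hsimple : ∀ i ∈ J, ∀ x ∈ X, x * cs.simple i ∈ X := fun i hi =>
    hX _ (Subgroup.subset_closure ⟨i, hi, rfl⟩)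
  induction hv using Subgroup.closure_induction'' generalizing x with
  | mem _ hg =>
    obtain ⟨i, hi, rfl⟩ := hg
    exact inNeighborsOutside_mul_simple (hsimple i hi) hx
  | inv_mem _ hg =>
    obtain ⟨i, hi, rfl⟩ := hg
    rw [inv_simple]
    exact inNeighborsOutside_mul_simple (hsimple i hi) hx
  | one => simp
  | mul a b ha _ iha ihb =>
    rw [← mul_assoc, ihb (hX a ha x hx), iha hx, Set.image_image]
    simp only [mul_assoc]

theorem inNeighborsOutside_eq_setOf_bruhatEdge {x : W}
    (hmin : ∀ y ∈ X, cs.length x ≤ cs.length y) :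
    inNeighborsOutside cs X x = {y | bruhatEdge cs y x} :=
  Set.ext fun _ => and_iff_right_of_imp fun ⟨_, _, _, hlt⟩ hyX => (hmin _ hyX).not_gt hlt

theorem mul_mem_doubleCoset_left {I J : Set B} {w u x : W} (hu : u ∈ parabolic cs I)
    (hx : x ∈ doubleCoset cs I J w) : u * x ∈ doubleCoset cs I J w := by
  obtain ⟨u', hu', v, hv, rfl⟩ := hx
  exact ⟨u * u', mul_mem hu hu', v, hv, by group⟩

theorem mul_mem_doubleCoset_right {I J : Set B} {w v x : W} (hv : v ∈ parabolic cs J)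
    (hx : x ∈ doubleCoset cs I J w) : x * v ∈ doubleCoset cs I J w := by
  obtain ⟨u, hu, v', hv', rfl⟩ := hx
  exact ⟨u, hu, v' * v, mul_mem hv' hv, by group⟩

theorem ncard_inNeighborsOutside_doubleCoset {I J : Set B} {w x : W}
    (hx : x ∈ doubleCoset cs I J w) :
    (inNeighborsOutside cs (doubleCoset cs I J w) x).ncard =
      (inNeighborsOutside cs (doubleCoset cs I J w) w).ncard := by
  obtain ⟨u, hu, v, hv, rfl⟩ := hx
  have hw : w ∈ doubleCoset cs I J w := ⟨1, one_mem _, 1, one_mem _, by simp⟩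
  rw [mul_assoc, inNeighborsOutside_mul_left (fun _ hu _ => mul_mem_doubleCoset_left hu) hu
      (mul_mem_doubleCoset_right hv hw),
    inNeighborsOutside_mul_right (fun _ hv _ => mul_mem_doubleCoset_right hv) hv hw,
    Set.ncard_image_of_injective _ (mul_right_injective u),
    Set.ncard_image_of_injective _ (mul_left_injective v)]

end BruhatGraph

theorem in_degree_from_outside_general
    (cs : CoxeterSystem M W) (w : W) (x₀ : W)
    (hx₀ : x₀ ∈ doubleCoset cs {i : B | cs.IsLeftDescent w i} {i : B | cs.IsRightDescent w i} w)
    (hmin : ∀ y ∈ doubleCoset cs {i : B | cs.IsLeftDescent w i}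
      {i : B | cs.IsRightDescent w i} w, cs.length x₀ ≤ cs.length y) :
    ∀ x ∈ doubleCoset cs {i : B | cs.IsLeftDescent w i} {i : B | cs.IsRightDescent w i} w,
      Set.ncard {y : W |
          y ∉ doubleCoset cs {i : B | cs.IsLeftDescent w i} {i : B | cs.IsRightDescent w i} w ∧
          bruhatEdge cs y x} = cs.length x₀ := by
  intro x hx
  change (inNeighborsOutside cs _ x).ncard = _
  rw [ncard_inNeighborsOutside_doubleCoset hx, ← ncard_inNeighborsOutside_doubleCoset hx₀,
    inNeighborsOutside_eq_setOf_bruhatEdge hmin, ncard_setOf_bruhatEdge]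

/-- Every element of the double coset `W_{D_L(w)} w W_{D_R(w)}` has exactly `ℓ(x₀)` incoming
Bruhat edges from outside the coset, where `x₀` is the minimal-length element of the coset. -/
theorem in_degree_from_outside [Finite W]
    (cs : CoxeterSystem M W) (w : W) (x₀ : W)
    (hx₀ : x₀ ∈ doubleCoset cs {i : B | cs.IsLeftDescent w i} {i : B | cs.IsRightDescent w i} w)
    (hmin : ∀ y ∈ doubleCoset cs {i : B | cs.IsLeftDescent w i}
      {i : B | cs.IsRightDescent w i} w, cs.length x₀ ≤ cs.length y) :
    ∀ x ∈ doubleCoset cs {i : B | cs.IsLeftDescent w i} {i : B | cs.IsRightDescent w i} w,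
      Set.ncard {y : W |
          y ∉ doubleCoset cs {i : B | cs.IsLeftDescent w i} {i : B | cs.IsRightDescent w i} w ∧
          bruhatEdge cs y x} = cs.length x₀ :=
  in_degree_from_outside_general cs w x₀ hx₀ hmin
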